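/- Explicit formula for γ: let w ∈ D_n, write w = d·b with d of length 2n, and write w = u·v·b where u is the principal prefix of w. Then the word v̄·b·ū belongs to D_n and is a conjugate of the mirror of β(w) = Sym(d)·b; hence v̄·b·ū = α(β(w)), the unique conjugate of the mirror of β(w) lying in D_n. -/
import Mathlib


/-- The two-letter alphabet {a, b}. -/
inductive Letter : Type
  | a : Letter
  | b : Letter
deriving DecidableEq, BEq, Repr

/-- Words over the alphabet {a, b}. -/
abbrev Word := List Letter

/-- δ(w) = |w|_a − |w|_b. -/
def delta (w : Word) : ℤ := (w.count Letter.a : ℤ) - (w.count Letter.b : ℤ)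

/-- A Dyck word: δ(w) = 0 and δ(p) ≥ 0 for every prefix p of w. -/
def IsDyck (w : Word) : Prop := delta w = 0 ∧ ∀ p : Word, p <+: w → 0 ≤ delta p

/-- Membership in D_n: w = d·b with d a Dyck word of length 2n. -/
def InD (n : ℕ) (w : Word) : Prop :=
  ∃ d : Word, IsDyck d ∧ d.length = 2 * n ∧ w = d ++ [Letter.b]

/-- Exchanging the letters a and b. -/
def Letter.flip : Letter → Letter
  | .a => .b
  | .b => .a

/-- The complement w̄ of a word w. -/
def comp (w : Word) : Word := w.map Letter.flip

/-- Sym(w): the complement of the mirror (reversal) of w. -/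
def sym (w : Word) : Word := comp w.reverse

/-- A palindrome: a word equal to its mirror. -/
def Palindrome (w : Word) : Prop := w.reverse = w

/-- w' is a conjugate of w: w = u·v and w' = v·u. -/
def Conj (w w' : Word) : Prop := ∃ u v : Word, w = u ++ v ∧ w' = v ++ u

/-- u is the principal prefix of w: the shortest prefix of w with δ(u) maximal. -/
def IsPrincipalPrefix (u w : Word) : Prop :=
  u <+: w ∧ (∀ p : Word, p <+: w → delta p ≤ delta u) ∧
    (∀ p : Word, p <+: w → delta p = delta u → u.length ≤ p.length)

/-- The graph of the map γ: writing w = u·v·b with u the principal prefix of w,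
    γ(w) = v̄·b·ū. -/
def GammaRel (w w' : Word) : Prop :=
  ∃ u v : Word, IsPrincipalPrefix u w ∧ w = u ++ v ++ [Letter.b] ∧
    w' = comp v ++ [Letter.b] ++ comp u

/-- F_n: the fixed points of γ in D_n. -/
def InF (n : ℕ) (w : Word) : Prop := InD n w ∧ GammaRel w w

/-- F_γ = ⋃_{n ≥ 1} F_n. -/
def InFgamma (w : Word) : Prop := ∃ n : ℕ, 1 ≤ n ∧ InF n w

/-- x^y: concatenation of the word x with itself y times. -/
def wpow (x : Word) : ℕ → Word
  | 0 => []
  | k + 1 => x ++ wpow x k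

/- ### Auxiliary lemmas -/

lemma delta_append (x y : Word) : delta (x ++ y) = delta x + delta y := by
  simp [delta, List.count_append]; ring

lemma delta_b : delta [Letter.b] = -1 := by decide

lemma flip_injective : Function.Injective Letter.flip := by
  intro x y h; cases x <;> cases y <;> simp_all [Letter.flip]

lemma delta_comp (x : Word) : delta (comp x) = -delta x := by
  induction x with
  | nil => rfl
  | cons l t ih =>
    have h1 : delta (l :: t) = delta [l] + delta t := delta_append [l] t
    have h2 : delta (Letter.flip l :: comp t) = delta [Letter.flip l] + delta (comp t) :=
      delta_append [Letter.flip l] (comp t)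
    have hc : comp (l :: t) = Letter.flip l :: comp t := rfl
    rw [hc, h2, h1, ih]
    have ha : delta [Letter.a] = 1 := by decide
    have hb : delta [Letter.b] = -1 := by decide
    cases l <;> simp only [Letter.flip, ha, hb] <;> ring

lemma length_comp (x : Word) : (comp x).length = x.length := by simp [comp]

/-- prefix of a fixed length within an append -/
lemma prefix_short {p x y : Word} (h : p <+: x ++ y) (hl : p.length ≤ x.length) :
    p <+: x := by
  have := List.prefix_iff_eq_take.mp h
  rw [List.take_append_of_le_length hl] at this
  rw [this]; exact List.take_prefix _ _

lemma prefix_append_cases {p x y : Word} (h : p <+: x ++ y) :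
    p <+: x ∨ ∃ q : Word, q <+: y ∧ p = x ++ q := by
  by_cases hl : p.length ≤ x.length
  · exact Or.inl (prefix_short h hl)
  · right
    have hp := List.prefix_iff_eq_take.mp h
    rw [List.take_append, List.take_of_length_le (by omega)] at hp
    exact ⟨y.take (p.length - x.length), List.take_prefix _ _, hp⟩

lemma prefix_comp {p x : Word} (h : p <+: comp x) :
    ∃ p0 : Word, p0 <+: x ∧ p = comp p0 := by
  have hp := List.prefix_iff_eq_take.mp h
  rw [comp, ← List.map_take] at hp
  exact ⟨x.take p.length, List.take_prefix _ _, hp⟩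

/-- Words that are "almost Dyck" ending one below zero. -/
def Good (w : Word) : Prop :=
  delta w = -1 ∧ ∀ p : Word, p <+: w → p ≠ w → 0 ≤ delta p

lemma InD_good {n : ℕ} {w : Word} (h : InD n w) : Good w ∧ w.length = 2 * n + 1 := by
  obtain ⟨d, hd, hl, rfl⟩ := h
  refine ⟨⟨?_, ?_⟩, by simp [hl]⟩
  · rw [delta_append, hd.1, delta_b]; ring
  · intro p hp hne
    have hlen : p.length ≤ d.length := by
      have h1 := hp.length_le
      simp only [List.length_append, List.length_singleton] at h1
      rcases lt_or_eq_of_le h1 with h2 | h2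
      · omega
      · exact absurd (List.IsPrefix.eq_of_length hp (by simpa using h2)) hne
    exact hd.2 p (prefix_short hp hlen)

lemma good_InD {n : ℕ} {w : Word} (h : Good w) (hl : w.length = 2 * n + 1) :
    InD n w := by
  have hne : w ≠ [] := by intro h0; rw [h0] at hl; simp at hl
  have hsplit : w.dropLast ++ [w.getLast hne] = w := List.dropLast_append_getLast hne
  have hdrop : w.dropLast <+: w := ⟨[w.getLast hne], hsplit⟩
  have hdlen : w.dropLast.length = 2 * n := by
    rw [List.length_dropLast, hl]
    omega
  have hdne : w.dropLast ≠ w := by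
    intro h0
    have := congrArg List.length h0
    rw [hdlen, hl] at this; omega
  have hd0 : 0 ≤ delta w.dropLast := h.2 _ hdrop hdne
  have hsum : delta w.dropLast + delta [w.getLast hne] = -1 := by
    rw [← delta_append, hsplit, h.1]
  have hlast : w.getLast hne = Letter.b := by
    cases hg : w.getLast hne
    · rw [hg] at hsum
      have : delta [Letter.a] = 1 := by decide
      omega
    · rfl
  have hdelta : delta w.dropLast = 0 := by
    rw [hlast, delta_b] at hsum; omega
  refine ⟨w.dropLast, ⟨hdelta, ?_⟩, hdlen, by rw [← hlast]; exact hsplit.symm⟩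
  intro p hp
  have hpw : p <+: w := hp.trans hdrop
  refine h.2 p hpw ?_
  intro h0
  have := hp.length_le
  rw [h0, hl, hdlen] at this; omega

lemma good_conj_unique_aux (x t q : Word)
    (gA : Good (t ++ q ++ x)) (gB : Good (q ++ (x ++ t))) :
    t ++ q ++ x = q ++ (x ++ t) := by
  rcases eq_or_ne t [] with rfl | ht
  · simp
  rcases eq_or_ne (q ++ x) [] with h | h
  · rcases List.append_eq_nil_iff.mp h with ⟨rfl, rfl⟩
    simp
  exfalso
  have h1 : 0 ≤ delta t := by
    refine gA.2 t ⟨q ++ x, by simp⟩ ?_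
    intro he
    have := congrArg List.length he
    simp only [List.length_append] at this
    have hq : q = [] ∧ x = [] := by
      constructor <;> [skip; skip] <;>
        (apply List.length_eq_zero_iff.mp; omega)
    exact h (by rw [hq.1, hq.2]; rfl)
  have h2 : 0 ≤ delta (q ++ x) := by
    refine gB.2 (q ++ x) ⟨t, by simp⟩ ?_
    intro he
    have := congrArg List.length he
    simp only [List.length_append] at this
    exact ht (List.length_eq_zero_iff.mp (by omega))
  have h3 := gA.1
  rw [delta_append, delta_append] at h3
  rw [delta_append] at h2
  omega

lemma good_conj_unique {m A B : Word} (hA : Conj m A) (hB : Conj m B)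
    (gA : Good A) (gB : Good B) : A = B := by
  obtain ⟨x, y, hm1, hA1⟩ := hA
  obtain ⟨p, q, hm2, hB1⟩ := hB
  have hx : x <+: m := ⟨y, hm1.symm⟩
  have hp : p <+: m := ⟨q, hm2.symm⟩
  have htot : x <+: p ∨ p <+: x := by
    rw [List.prefix_iff_eq_take.mp hx, List.prefix_iff_eq_take.mp hp]
    rcases le_total x.length p.length with hle | hle
    · left
      rw [List.prefix_iff_eq_take]
      rw [List.length_take]
      rw [List.take_take]
      congr 1
      have := hx.length_le
      omega
    · right
      rw [List.prefix_iff_eq_take]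
      rw [List.length_take]
      rw [List.take_take]
      congr 1
      have := hp.length_le
      omega
  rcases htot with ⟨t, rfl⟩ | ⟨t, rfl⟩
  · have hy : y = t ++ q := by
      have : x ++ y = x ++ (t ++ q) := by rw [hm1.symm, hm2]; simp
      exact List.append_cancel_left this
    subst hy; subst hA1; subst hB1
    exact good_conj_unique_aux x t q (by simpa using gA) (by simpa using gB)
  · have hq : q = t ++ y := by
      have : p ++ q = p ++ (t ++ y) := by rw [hm2.symm, hm1]; simp
      exact List.append_cancel_left this
    subst hq; subst hA1; subst hB1
    exact (good_conj_unique_aux p t y (by simpa using gB) (by simpa using gA)).symm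

/-- Explicit formula for γ: with w = d·b = u·v·b ∈ D_n, u the principal prefix,
    the word v̄·b·ū belongs to D_n, is a conjugate of the mirror of β(w) = Sym(d)·b,
    and is the unique such element of D_n, i.e. v̄·b·ū = α(β(w)). -/
theorem gamma_formula (n : ℕ) (w d u v : Word)
    (hw : InD n w) (hwd : w = d ++ [Letter.b]) (hdl : d.length = 2 * n)
    (hu : IsPrincipalPrefix u w) (hwuv : w = u ++ v ++ [Letter.b]) :
    InD n (comp v ++ [Letter.b] ++ comp u) ∧
    Conj (sym d ++ [Letter.b]).reverse (comp v ++ [Letter.b] ++ comp u) ∧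
    (∀ w'' : Word, InD n w'' → Conj (sym d ++ [Letter.b]).reverse w'' →
      w'' = comp v ++ [Letter.b] ++ comp u) := by
  -- d = u ++ v
  have hd_uv : d = u ++ v := by
    apply List.append_cancel_right (bs := [Letter.b])
    rw [← hwd, ← hwuv]
  -- d is Dyck
  have hdyck : IsDyck d := by
    obtain ⟨d0, hd0, _, heq0⟩ := hw
    have : d0 = d := List.append_cancel_right (heq0.symm.trans hwd)
    rwa [this] at hd0
  have hdelta_uv : delta u + delta v = 0 := by
    rw [← delta_append, ← hd_uv, hdyck.1]
  -- prefixes of d are prefixes of w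
  have hd_pref_w : d <+: w := ⟨[Letter.b], hwd.symm⟩
  -- δ u ≥ 0
  have hu0 : 0 ≤ delta u := by
    have := hu.2.1 [] List.nil_prefix
    simpa [delta] using this
  -- length of w
  have hwlen : w.length = 2 * n + 1 := by
    rw [hwd]; simp [hdl]
  -- if u ≠ [] then δ u ≥ 1
  have hu1 : u ≠ [] → 1 ≤ delta u := by
    intro hne
    have hsplit : u.dropLast ++ [u.getLast hne] = u := List.dropLast_append_getLast hne
    have hdrop_u : u.dropLast <+: u := ⟨[u.getLast hne], hsplit⟩
    have hdrop_w : u.dropLast <+: w := hdrop_u.trans hu.1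
    have hlt : delta u.dropLast < delta u := by
      rcases lt_or_eq_of_le (hu.2.1 _ hdrop_w) with h | h
      · exact h
      · exfalso
        have := hu.2.2 _ hdrop_w h
        rw [List.length_dropLast] at this
        have : u.length = 0 := by omega
        exact hne (List.length_eq_zero_iff.mp this)
    -- δ(dropLast u) ≥ 0 since it is a prefix of d
    have hulen : u.length ≤ 2 * n + 1 := by
      have := hu.1.length_le; omega
    have hdl_pref_d : u.dropLast <+: d := by
      apply prefix_short (by rw [← hwd]; exact hdrop_w)
      rw [List.length_dropLast, hdl]; omega
    have := hdyck.2 _ hdl_pref_d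
    omega
  -- the candidate word and its Goodness
  set W' : Word := comp v ++ [Letter.b] ++ comp u with hW'
  have hW'good : Good W' := by
    constructor
    · rw [delta_append, delta_append, delta_comp, delta_comp, delta_b]
      omega
    · intro p hp hne
      rcases prefix_append_cases hp with hp1 | ⟨r, hr, rfl⟩
      · rcases prefix_append_cases hp1 with hp2 | ⟨s, hs, rfl⟩
        · -- p <+: comp v
          obtain ⟨p0, hp0, rfl⟩ := prefix_comp hp2
          have hup0 : u ++ p0 <+: w := by
            obtain ⟨r, hr⟩ := hp0
            exact ⟨r ++ [Letter.b], by rw [hwuv, ← hr]; simp⟩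
          have := hu.2.1 _ hup0
          rw [delta_append] at this
          rw [delta_comp]
          omega
        · -- p = comp v ++ s, s <+: [b]
          rcases List.prefix_cons_iff.mp hs with rfl | ⟨s', rfl, hs'⟩
          · rw [delta_append, delta_comp]
            have : delta [] = 0 := rfl
            omega
          · have : s' = [] := List.prefix_nil.mp hs'
            subst this
            -- p = comp v ++ [b]; need δ u ≥ 1 so u ≠ []
            have hune : u ≠ [] := by
              intro h0
              apply hne
              rw [hW', h0]
              simp [comp]
            have := hu1 hune
            rw [delta_append, delta_comp, delta_b]
            omega
      · -- p = (comp v ++ [b]) ++ r, r <+: comp u, r ≠ comp u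
        obtain ⟨u0, hu0p, rfl⟩ := prefix_comp hr
        have hu0ne : u0 ≠ u := by
          intro h0; subst h0; exact hne rfl
        have hu0w : u0 <+: w := hu0p.trans hu.1
        have hlt : delta u0 < delta u := by
          rcases lt_or_eq_of_le (hu.2.1 _ hu0w) with h | h
          · exact h
          · exfalso
            have hlen := hu.2.2 _ hu0w h
            have := List.IsPrefix.eq_of_length hu0p
              (le_antisymm hu0p.length_le hlen)
            exact hu0ne this
        rw [delta_append, delta_append, delta_comp, delta_comp, delta_b]
        omega
  have hW'len : W'.length = 2 * n + 1 := by
    rw [hW']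
    simp only [List.length_append, length_comp, List.length_singleton]
    have : u.length + v.length = 2 * n := by
      have := congrArg List.length hd_uv
      simp only [List.length_append] at this
      omega
    omega
  have hW'InD : InD n W' := good_InD hW'good hW'len
  -- the mirror of β(w)
  have hm : (sym d ++ [Letter.b]).reverse = ([Letter.b] ++ comp u) ++ comp v := by
    rw [List.reverse_append]
    simp only [List.reverse_singleton, sym, comp, List.map_reverse, List.reverse_reverse]
    rw [hd_uv, List.map_append]
    simp
  have hconj : Conj (sym d ++ [Letter.b]).reverse W' := by
    refine ⟨[Letter.b] ++ comp u, comp v, hm, ?_⟩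
    rw [hW']
    simp
  refine ⟨hW'InD, hconj, ?_⟩
  intro w'' hw'' hconj''
  exact good_conj_unique hconj'' hconj (InD_good hw'').1 (InD_good hW'InD).1
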